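/- arXiv:1410.7504 — 5 statements merged into one kernel-verified Lean document; each statement's English description precedes it below -/
import Mathlib

section
/- Let B be an n×m integer matrix with injective associated map ℤᵐ → ℤⁿ, such that the image of ℕᵐ under B equals ker A ∩ ℕⁿ for some integer matrix A (the Hilbert basis situation). Then the rational cone σ = {v ∈ ℚᵐ : Bv ∈ ℚ₊ⁿ} equals ℚ₊ᵐ. -/
/-!
Clearing denominators reduces the claim to integer vectors: if `v ∈ σ` then `d • v ∈ σ ∩ ℤᵐ` for
some positive integer `d`. For `z ∈ σ ∩ ℤᵐ` the vector `B z` lies in `ℕⁿ ∩ ker A`, because `A B`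
vanishes on `ℕᵐ` and hence on `ℤᵐ = ℕᵐ - ℕᵐ`; so `B z = B w` with `w ∈ ℕᵐ`, and injectivity gives
`z = w ≥ 0`. The reverse inclusion holds because the columns `B eⱼ` lie in `B(ℕᵐ) ⊆ ℕⁿ`.
-/

theorem exists_pos_nat_mul_eq_intCast {ι : Type*} [Fintype ι] (v : ι → ℚ) :
    ∃ d : ℕ, 0 < d ∧ ∃ z : ι → ℤ, ∀ i, (z i : ℚ) = d * v i := by
  classical
  refine ⟨∏ i, (v i).den, Finset.prod_pos fun i _ => (v i).den_pos,
    fun i => (v i).num * ∏ j ∈ Finset.univ.erase i, ((v j).den : ℤ), fun i => ?_⟩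
  rw [← Finset.mul_prod_erase Finset.univ _ (Finset.mem_univ i)]
  push_cast
  rw [← Rat.mul_den_eq_num]
  ring

namespace Matrix

variable {m n R : Type*} [Fintype n]

theorem mulVec_eq_zero_of_forall_nonneg [Ring R] [Lattice R] [IsOrderedAddMonoid R]
    (M : Matrix m n R) (h : ∀ w, 0 ≤ w → M *ᵥ w = 0) (z : n → R) : M *ᵥ z = 0 := by
  rw [← posPart_sub_negPart z, mulVec_sub, h _ (posPart_nonneg z), h _ (negPart_nonneg z),
    sub_zero]

theorem entry_nonneg_of_forall_mulVec_nonneg [NonAssocSemiring R] [Preorder R] [ZeroLEOneClass R]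
    [DecidableEq n] (M : Matrix m n R) (h : ∀ w, 0 ≤ w → 0 ≤ M *ᵥ w) (i : m) (j : n) :
    0 ≤ M i j := by
  simpa [mulVec_single_one] using h (Pi.single j 1) (Pi.single_nonneg.mpr zero_le_one) i

theorem mulVec_nonneg [Semiring R] [PartialOrder R] [IsOrderedRing R] {M : Matrix m n R}
    (hM : ∀ i j, 0 ≤ M i j) {v : n → R} (hv : 0 ≤ v) : 0 ≤ M *ᵥ v :=
  fun i => dotProduct_nonneg_of_nonneg (hM i) hv

theorem nonneg_of_map_intCast_mulVec_nonneg (B : Matrix m n ℤ)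
    (hB : ∀ z : n → ℤ, 0 ≤ B *ᵥ z → 0 ≤ z) {v : n → ℚ}
    (hv : 0 ≤ B.map (Int.cast : ℤ → ℚ) *ᵥ v) : 0 ≤ v := by
  obtain ⟨d, hd, z, hz⟩ := exists_pos_nat_mul_eq_intCast v
  have hzv : ((↑) ∘ z : n → ℚ) = (d : ℚ) • v := funext hz
  have hBz : 0 ≤ B *ᵥ z := fun i => by
    have hcast : ((B *ᵥ z) i : ℚ) = d * (B.map (Int.cast : ℤ → ℚ) *ᵥ v) i := by
      rw [← smul_eq_mul, ← Pi.smul_apply, ← mulVec_smul, ← hzv]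
      exact RingHom.map_mulVec (Int.castRingHom ℚ) B z i
    exact Int.cast_nonneg_iff.mp (hcast ▸ mul_nonneg (Nat.cast_nonneg d) (hv i))
  intro i
  have hzi : (0 : ℚ) ≤ d * v i := hz i ▸ Int.cast_nonneg (hB z hBz i)
  exact nonneg_of_mul_nonneg_right hzi (Nat.cast_pos.mpr hd)

end Matrix

open Matrix

theorem stmt_9_general (k n m : ℕ)
    (A : Matrix (Fin k) (Fin n) ℤ) (B : Matrix (Fin n) (Fin m) ℤ)
    (hinj : Function.Injective B.mulVec)
    (himg : ∀ u : Fin n → ℤ,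
      (A.mulVec u = 0 ∧ ∀ i, 0 ≤ u i) ↔
        ∃ w : Fin m → ℤ, (∀ i, 0 ≤ w i) ∧ B.mulVec w = u) :
    {v : Fin m → ℚ | ∀ j, 0 ≤ (B.map (Int.cast : ℤ → ℚ)).mulVec v j} =
      {v : Fin m → ℚ | ∀ i, 0 ≤ v i} := by
  have hB_of_nonneg (w : Fin m → ℤ) (hw : 0 ≤ w) : A *ᵥ (B *ᵥ w) = 0 ∧ 0 ≤ B *ᵥ w :=
    (himg _).mpr ⟨w, hw, rfl⟩
  have hAB : ∀ z, A *ᵥ (B *ᵥ z) = 0 := by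
    simpa only [mulVec_mulVec] using
      (A * B).mulVec_eq_zero_of_forall_nonneg fun w hw => by
        rw [← mulVec_mulVec]; exact (hB_of_nonneg w hw).1
  have hB_int (z : Fin m → ℤ) (hz : 0 ≤ B *ᵥ z) : 0 ≤ z := by
    obtain ⟨w, hw, hBw⟩ := (himg _).mp ⟨hAB z, hz⟩
    exact hinj hBw ▸ hw
  have hB_entries (i : Fin n) (j : Fin m) : (0 : ℚ) ≤ B.map (Int.cast : ℤ → ℚ) i j :=
    Int.cast_nonneg (B.entry_nonneg_of_forall_mulVec_nonneg (fun w hw =>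
      (hB_of_nonneg w hw).2) i j)
  ext v
  exact ⟨B.nonneg_of_map_intCast_mulVec_nonneg hB_int, mulVec_nonneg hB_entries⟩

/-- If `B : ℤᵐ → ℤⁿ` is injective with columns in `ℕⁿ` and `B(ℕᵐ) = ker A ∩ ℕⁿ`,
then the rational cone `σ = {v ∈ ℚᵐ : Bv ∈ ℚ₊ⁿ}` equals the nonnegative
orthant `ℚ₊ᵐ`. -/
theorem stmt_9 (k n m : ℕ)
    (A : Matrix (Fin k) (Fin n) ℤ) (B : Matrix (Fin n) (Fin m) ℤ)
    (hnonneg : ∀ i j, 0 ≤ B i j)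
    (hinj : Function.Injective B.mulVec)
    (himg : ∀ u : Fin n → ℤ,
      (A.mulVec u = 0 ∧ ∀ i, 0 ≤ u i) ↔
        ∃ w : Fin m → ℤ, (∀ i, 0 ≤ w i) ∧ B.mulVec w = u) :
    {v : Fin m → ℚ | ∀ j, 0 ≤ (B.map (Int.cast : ℤ → ℚ)).mulVec v j} =
      {v : Fin m → ℚ | ∀ i, 0 ≤ v i} :=
  stmt_9_general k n m A B hinj himg
end

section
/- Let A be a k×n integer matrix and suppose ker A ∩ ℕⁿ contains a vector with all entries strictly positive. Let B be the n×m matrix whose columns form the Hilbert basis of ker A ∩ ℕⁿ. Then ker A = B(ℤᵐ) as subgroups of ℤⁿ, i.e., the image of B over ℤ equals the full kernel of A. -/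
/-!
Shifting by a large multiple of the strictly positive kernel vector `p` makes any `u ∈ ker A`
nonnegative, so `u = (u + N p) - N p` is a difference of two points of `ker A ∩ ℕⁿ = B(ℕᵐ)`.
Conversely `w = w⁺ - w⁻` writes `B w` as a difference of two points of `B(ℕᵐ) ⊆ ker A`.
-/

open Matrix

theorem exists_nonneg_add_nsmul {ι α : Type*} [Finite ι] [AddCommGroup α] [LinearOrder α]
    [IsOrderedAddMonoid α] [Archimedean α] (u : ι → α) {p : ι → α} (hp : ∀ i, 0 < p i) :
    ∃ N : ℕ, 0 ≤ u + N • p := by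
  have := Fintype.ofFinite ι
  choose n hn using fun i => Archimedean.arch (-u i) (hp i)
  refine ⟨∑ i, n i, fun i => ?_⟩
  have hle : n i • p i ≤ (∑ j, n j) • p i :=
    nsmul_le_nsmul_left (hp i).le (Finset.single_le_sum (by simp) (Finset.mem_univ i))
  exact neg_le_iff_add_nonneg'.mp ((hn i).trans hle)

theorem AddMonoidHom.eq_zero_of_forall_nonneg {G H : Type*} [Lattice G] [AddGroup G]
    [AddLeftMono G] [AddGroup H] (f : G →+ H) (hf : ∀ x, 0 ≤ x → f x = 0) (x : G) : f x = 0 := by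
  rw [← posPart_sub_negPart x, map_sub, hf _ (posPart_nonneg x), hf _ (negPart_nonneg x),
    sub_zero]

/-- If `ker A ∩ ℕⁿ` contains a strictly positive vector and `B(ℕᵐ) = ker A ∩ ℕⁿ`
(the Hilbert basis situation), then `B(ℤᵐ) = ker A` as subgroups of `ℤⁿ`. -/
theorem stmt_10 (k n m : ℕ)
    (A : Matrix (Fin k) (Fin n) ℤ) (B : Matrix (Fin n) (Fin m) ℤ)
    (hpos : ∃ u : Fin n → ℤ, A.mulVec u = 0 ∧ ∀ i, 0 < u i)
    (hgen : ∀ u : Fin n → ℤ,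
      (A.mulVec u = 0 ∧ ∀ i, 0 ≤ u i) ↔
        ∃ w : Fin m → ℤ, (∀ i, 0 ≤ w i) ∧ B.mulVec w = u) :
    ∀ u : Fin n → ℤ, A.mulVec u = 0 ↔ ∃ w : Fin m → ℤ, B.mulVec w = u := by
  obtain ⟨p, hAp, hp⟩ := hpos
  intro u
  constructor
  · intro hAu
    obtain ⟨N, hN⟩ := exists_nonneg_add_nsmul u hp
    obtain ⟨w, -, hw⟩ := (hgen (u + N • p)).1
      ⟨by rw [mulVec_add, mulVec_smul, hAu, hAp, smul_zero, add_zero], hN⟩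
    obtain ⟨w', -, hw'⟩ :=
      (hgen (N • p)).1 ⟨by rw [mulVec_smul, hAp, smul_zero], fun i => nsmul_nonneg (hp i).le N⟩
    exact ⟨w - w', by rw [mulVec_sub, hw, hw', add_sub_cancel_right]⟩
  · rintro ⟨w, rfl⟩
    rw [mulVec_mulVec]
    exact (A * B).mulVecLin.toAddMonoidHom.eq_zero_of_forall_nonneg
      (fun v hv => by simpa [mulVec_mulVec] using ((hgen _).2 ⟨v, hv, rfl⟩).1) w
end

section
/- Let Y ⊆ ℂⁿ be the zero set of binomials x^{ℓ⁺} − x^{ℓ⁻} for ℓ in a subgroup Λ of ℤⁿ, and suppose 0 ∈ Y, equivalently ker A contains a strictly positive integer vector v = (v₁,…,vₙ) (where the rows of A generate Λ). Then the map H : Y × [0,1] → ℂⁿ, (y,t) ↦ (t^{v₁}y₁, …, t^{vₙ}yₙ) maps into Y, is continuous, satisfies H(y,1) = y and H(y,0) = 0; hence Y is contractible. -/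
open scoped unitInterval

/-!
If `⟨v, ℓ⟩ = 0` for all `ℓ ∈ Λ`, then `t^{⟨v, ℓ⁺⟩} = t^{⟨v, ℓ⁻⟩}`, so rescaling a point of the
binomial variety by `y ↦ (t^{v₁} y₁, …, t^{vₙ} yₙ)` multiplies both sides of every binomial
equation by the same power of `t`. For `t ∈ [0,1]` this is a homotopy from the identity to the
constant map at `0` (all weights being positive), so the variety is contractible.
-/

section WeightedScale

variable {ι R : Type*}

def weightedScale [Monoid R] (w : ι → ℕ) (t : R) (y : ι → R) : ι → R :=
  fun i => t ^ w i * y i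

@[simp]
lemma weightedScale_one [Monoid R] (w : ι → ℕ) (y : ι → R) : weightedScale w 1 y = y := by
  funext i
  simp [weightedScale]

lemma weightedScale_zero [MonoidWithZero R] {w : ι → ℕ} (hw : ∀ i, w i ≠ 0) (y : ι → R) :
    weightedScale w 0 y = 0 := by
  funext i
  simp [weightedScale, hw i]

lemma Continuous.weightedScale {X : Type*} [TopologicalSpace X] [TopologicalSpace R] [Monoid R]
    [ContinuousMul R] (w : ι → ℕ) {f : X → R} {g : X → ι → R} (hf : Continuous f)
    (hg : Continuous g) : Continuous fun x => weightedScale w (f x) (g x) :=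
  continuous_pi fun i => (hf.pow _).mul ((continuous_apply i).comp hg)

lemma prod_weightedScale_pow [Fintype ι] [CommMonoid R] (w a : ι → ℕ) (t : R) (y : ι → R) :
    ∏ i, weightedScale w t y i ^ a i = t ^ (∑ i, a i * w i) * ∏ i, y i ^ a i := by
  simp only [weightedScale, mul_pow, ← pow_mul, Finset.prod_mul_distrib,
    Finset.prod_pow_eq_pow_sum, mul_comm]

end WeightedScale

section BinomialVariety

variable {ι R : Type*} [Fintype ι]

def binomialVariety [CommMonoid R] (Λ : Set (ι → ℤ)) : Set (ι → R) :=
  {y | ∀ ℓ ∈ Λ, ∏ i, y i ^ (ℓ i).toNat = ∏ i, y i ^ (-(ℓ i)).toNat}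

lemma one_mem_binomialVariety [CommMonoid R] (Λ : Set (ι → ℤ)) :
    (1 : ι → R) ∈ binomialVariety Λ := by
  simp [binomialVariety]

lemma sum_toNat_mul_eq_sum_neg_toNat_mul {ℓ v : ι → ℤ} (hv : ∀ i, 0 ≤ v i)
    (hℓv : ∑ i, ℓ i * v i = 0) :
    ∑ i, (ℓ i).toNat * (v i).toNat = ∑ i, (-(ℓ i)).toNat * (v i).toNat := by
  zify [hv]
  rw [← sub_eq_zero, ← Finset.sum_sub_distrib, ← hℓv]
  refine Finset.sum_congr rfl fun i _ => ?_
  rw [← sub_mul, Int.toNat_sub_toNat_neg, Int.toNat_of_nonneg (hv i)]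

lemma weightedScale_mem_binomialVariety [CommMonoid R] {Λ : Set (ι → ℤ)} {v : ι → ℤ}
    (hv : ∀ i, 0 ≤ v i) (hΛv : ∀ ℓ ∈ Λ, ∑ i, ℓ i * v i = 0) {y : ι → R}
    (hy : y ∈ binomialVariety Λ) (t : R) :
    weightedScale (fun i => (v i).toNat) t y ∈ binomialVariety Λ := by
  intro ℓ hℓ
  rw [prod_weightedScale_pow, prod_weightedScale_pow, hy ℓ hℓ,
    sum_toNat_mul_eq_sum_neg_toNat_mul hv (hΛv ℓ hℓ)]

end BinomialVariety

theorem contractibleSpace_of_weightedScale_mem {ι : Type*} {Y : Set (ι → ℂ)} {w : ι → ℕ}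
    (hw : ∀ i, w i ≠ 0) (hY : ∀ y ∈ Y, ∀ t : I, weightedScale w (t : ℂ) y ∈ Y)
    (hne : Y.Nonempty) : ContractibleSpace Y := by
  obtain ⟨y₀, hy₀⟩ := hne
  have h0 : (0 : ι → ℂ) ∈ Y := by
    simpa [weightedScale_zero hw] using hY y₀ hy₀ 0
  let H : ContinuousMap.Homotopy (ContinuousMap.const Y ⟨0, h0⟩) (ContinuousMap.id Y) :=
    { toFun := fun p => ⟨weightedScale w (p.1 : ℂ) p.2, hY _ p.2.2 p.1⟩
      continuous_toFun := (Continuous.weightedScale w (by fun_prop) (by fun_prop)).subtype_mk _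
      map_zero_left := fun y => Subtype.ext (by simp [weightedScale_zero hw])
      map_one_left := fun y => Subtype.ext (by simp) }
  exact (contractible_iff_id_nullhomotopic Y).mpr ⟨⟨0, h0⟩, ContinuousMap.Homotopic.symm ⟨H⟩⟩

/-- Let `Y ⊆ ℂⁿ` be the zero set of the binomials `x^{ℓ⁺} - x^{ℓ⁻}`, `ℓ ∈ Λ`,
and suppose there is a strictly positive integer vector `v` orthogonal to `Λ`
(equivalently `0 ∈ Y`).  Then the scaling homotopy
`H(y,t) = (t^{v₁}y₁, …, t^{vₙ}yₙ)` maps into `Y`, is continuous, satisfies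
`H(y,1) = y` and `H(y,0) = 0`; hence `Y` is contractible. -/
theorem stmt_11 (n : ℕ) (Λ : AddSubgroup (Fin n → ℤ))
    (Y : Set (Fin n → ℂ))
    (hY : Y = {y | ∀ ℓ ∈ Λ,
      (∏ i, y i ^ (ℓ i).toNat) = ∏ i, y i ^ (-(ℓ i)).toNat})
    (v : Fin n → ℤ) (hvpos : ∀ i, 0 < v i)
    (hv : ∀ ℓ ∈ Λ, (∑ i, ℓ i * v i) = 0) :
    (∀ (y : Fin n → ℂ), y ∈ Y → ∀ t : ℂ,
        (fun i => t ^ (v i).toNat * y i) ∈ Y) ∧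
    Continuous (fun p : Y × I =>
        fun i => (((p.2 : ℝ) : ℂ)) ^ (v i).toNat * (p.1 : Fin n → ℂ) i) ∧
    (∀ (y : Y), (fun i => (((1 : ℝ) : ℂ)) ^ (v i).toNat * (y : Fin n → ℂ) i)
        = (y : Fin n → ℂ)) ∧
    (∀ (y : Y), (fun i => (((0 : ℝ) : ℂ)) ^ (v i).toNat * (y : Fin n → ℂ) i)
        = (0 : Fin n → ℂ)) ∧
    ContractibleSpace Y := by
  have hY' : Y = binomialVariety (Λ : Set (Fin n → ℤ)) := hY
  subst hY'
  have hw : ∀ i, (v i).toNat ≠ 0 := fun i => by have := hvpos i; omega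
  have hscale := fun y (hy : y ∈ binomialVariety (Λ : Set (Fin n → ℤ))) (t : ℂ) =>
    weightedScale_mem_binomialVariety (fun i => (hvpos i).le) hv hy t
  refine ⟨hscale, Continuous.weightedScale _ (by fun_prop) (by fun_prop),
    fun y => by rw [Complex.ofReal_one]; exact weightedScale_one _ _,
    fun y => by rw [Complex.ofReal_zero]; exact weightedScale_zero hw _, ?_⟩
  · exact contractibleSpace_of_weightedScale_mem hw (fun y hy t => hscale y hy t)
      ⟨1, one_mem_binomialVariety _⟩
end

section
/- Let B be an injective n×m integer matrix with rows spanning a subsemigroup of ℤᵐ whose saturation is ℕᵐ (so each i has a row Nᵢeᵢ of B with Nᵢ ≥ 1). Then the monomial map φ : ℂᵐ → ℂⁿ, φ(t)ⱼ = ∏ᵢ tᵢ^{bⱼᵢ} (with the convention 0⁰ = 1), is a proper and finite map; in particular, the coordinate functions include tᵢ^{Nᵢ} for each i, so ‖φ(t)‖ → ∞ as ‖t‖ → ∞. -/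
open Filter Topology

/-! Each coordinate `tᵢ` of the source is recovered, up to the finite-to-one and coercive map
`z ↦ z ^ Nᵢ`, from the coordinate `φ(t)ⱼ = tᵢ ^ Nᵢ` of the image. Hence `φ(t)` stays bounded
only while `t` does, which with Tychonoff's theorem in the form `coprodᵢ cocompact = cocompact`
gives properness; and a fibre of `φ` lies in a product of sets of `Nᵢ`-th roots. -/

section ControlledCoordinates

variable {ι Y : Type*} {X Z : ι → Type*} {f : (Π i, X i) → Y} {p : ∀ i, Y → Z i}
  {g : ∀ i, X i → Z i}

theorem isProperMap_of_forall_comp_eq_comp_eval [∀ i, TopologicalSpace (X i)]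
    [∀ i, TopologicalSpace (Z i)] [TopologicalSpace Y] [T2Space Y] [CompactlyCoherentSpace Y]
    (hf : Continuous f) (hp : ∀ i, Continuous (p i))
    (hg : ∀ i, Tendsto (g i) (cocompact (X i)) (cocompact (Z i)))
    (hfg : ∀ i x, p i (f x) = g i (x i)) : IsProperMap f := by
  refine isProperMap_iff_tendsto_cocompact.mpr ⟨hf, ?_⟩
  rw [← coprodᵢ_cocompact, Filter.coprodᵢ, tendsto_iSup]
  intro i
  have hpf : Tendsto (p i ∘ f) (comap (Function.eval i) (cocompact (X i))) (cocompact (Z i)) := by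
    simpa only [Function.comp_def, hfg] using (hg i).comp tendsto_comap
  exact (tendsto_comap_iff.mpr hpf).mono_right (comap_cocompact_le (hp i))

theorem finite_preimage_singleton_of_forall_comp_eq_comp_eval [Finite ι]
    (hg : ∀ i z, (g i ⁻¹' {z}).Finite) (hfg : ∀ i x, p i (f x) = g i (x i)) (y : Y) :
    (f ⁻¹' {y}).Finite := by
  refine (Set.Finite.pi fun i => hg i (p i y)).subset fun x hx i _ => ?_
  rw [Set.mem_preimage, Set.mem_singleton_iff, ← hfg, Set.mem_singleton_iff.mp hx]

end ControlledCoordinates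

theorem tendsto_pow_cocompact {𝕜 : Type*} [NormedDivisionRing 𝕜] [ProperSpace 𝕜] {N : ℕ}
    (hN : N ≠ 0) : Tendsto (fun z : 𝕜 => z ^ N) (cocompact 𝕜) (cocompact 𝕜) := by
  rw [← Metric.cobounded_eq_cocompact, ← tendsto_norm_atTop_iff_cobounded]
  simp_rw [norm_pow]
  exact (tendsto_pow_atTop hN).comp tendsto_norm_cobounded_atTop

theorem finite_pow_preimage_singleton {R : Type*} [CommRing R] [IsDomain R] {N : ℕ} (hN : N ≠ 0)
    (a : R) : ((fun z : R => z ^ N) ⁻¹' {a}).Finite :=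
  (Polynomial.nthRoots N a).finite_toSet.subset fun z hz => by
    simpa [Polynomial.mem_nthRoots (Nat.pos_of_ne_zero hN)] using hz

theorem prod_pow_toNat_single {M ι : Type*} [CommMonoid M] [Fintype ι] [DecidableEq ι]
    (t : ι → M) (i : ι) (N : ℤ) :
    ∏ k, t k ^ ((Pi.single i N : ι → ℤ) k).toNat = t i ^ N.toNat := by
  rw [Fintype.prod_eq_single i fun k hk => by simp [hk]]
  simp

theorem stmt_15_general (n m : ℕ) (B : Matrix (Fin n) (Fin m) ℤ)
    (hrows : ∀ i : Fin m, ∃ (j : Fin n) (N : ℤ), 1 ≤ N ∧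
      (fun i' => B j i') = Pi.single i N)
    (φ : (Fin m → ℂ) → (Fin n → ℂ))
    (hφ : ∀ t j, φ t j = ∏ i, t i ^ (B j i).toNat) :
    IsProperMap φ ∧ ∀ y : Fin n → ℂ, (φ ⁻¹' {y}).Finite := by
  choose j N hN hB using hrows
  have hN0 : ∀ i, (N i).toNat ≠ 0 := fun i => by have := hN i; omega
  have hφj : ∀ i t, φ t (j i) = t i ^ (N i).toNat := fun i t => by
    rw [hφ, ← prod_pow_toNat_single t i, ← hB]
  have hcont : Continuous φ := by
    obtain rfl : φ = fun t j => ∏ i, t i ^ (B j i).toNat := funext fun t => funext (hφ t)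
    fun_prop
  exact ⟨isProperMap_of_forall_comp_eq_comp_eval hcont (fun i => continuous_apply (j i))
      (fun i => tendsto_pow_cocompact (hN0 i)) hφj,
    finite_preimage_singleton_of_forall_comp_eq_comp_eval (p := fun i y => y (j i))
      (fun i => finite_pow_preimage_singleton (hN0 i)) hφj⟩

/-- If the monomial map `φ : ℂᵐ → ℂⁿ`, `φ(t)ⱼ = ∏ᵢ tᵢ^{bⱼᵢ}` (entries of `B`
in `ℕ`), has among its components `tᵢ^{Nᵢ}` with `Nᵢ ≥ 1` for each `i`
(i.e. for each `i` some row of `B` is `Nᵢ eᵢ`), then `φ` is proper and has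
finite fibers. -/
theorem stmt_15 (n m : ℕ) (B : Matrix (Fin n) (Fin m) ℤ)
    (hnonneg : ∀ j i, 0 ≤ B j i)
    (hrows : ∀ i : Fin m, ∃ (j : Fin n) (N : ℤ), 1 ≤ N ∧
      (fun i' => B j i') = Pi.single i N)
    (φ : (Fin m → ℂ) → (Fin n → ℂ))
    (hφ : ∀ t j, φ t j = ∏ i, t i ^ (B j i).toNat) :
    IsProperMap φ ∧ ∀ y : Fin n → ℂ, (φ ⁻¹' {y}).Finite :=
  stmt_15_general n m B hrows φ hφ
end

section
/- Let S be the domain {z ∈ ℂ² : 3/4 < |z₁| < 5/4 and 3/4 < |z₂| < 5/4} (a product of two annuli) and for ε with −1/2 < ε < 1/2 let D_ε = {z ∈ S : z₁ − z₂ = 1 + ε}. Then D_ε is the disjoint union of the two nonempty relatively open-and-closed subsets D_ε⁺ = {z ∈ D_ε : Im z₁ > 0} and D_ε⁻ = {z ∈ D_ε : Im z₁ < 0}; in particular no point of D_ε has Im z₁ = 0. -/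
/-!
A real point `x` of the annulus `r < |x| < R` lies in `(r, R)` or in `(-R, -r)`. If `x` and `x - c`
lie in the same component then `|c| < R - r`, and if they lie in opposite ones then `|c| > 2r`;
for `r = 3/4`, `R = 5/4` and `c = 1 + ε` neither can happen, so `Im z₁` never vanishes on `Dε`.
Hence the two halves of `Dε` are the sets where the continuous function `Im z₁` is positive,
respectively negative, and both are clopen. They are nonempty because the unit circles centred at
`0` and `c` meet at the conjugate points `c/2 ± i √(1 - c²/4)`.
-/

open Complex ComplexConjugate Set

lemma abs_sub_notMem_Ioo_of_abs_mem_Ioo {r R c x : ℝ} (hc₁ : R - r ≤ |c|) (hc₂ : |c| ≤ 2 * r)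
    (hx : |x| ∈ Ioo r R) : |x - c| ∉ Ioo r R := by
  rintro ⟨hxc₁, hxc₂⟩
  obtain ⟨hx₁, hx₂⟩ := hx
  rcases abs_cases x with ⟨ex, -⟩ | ⟨ex, -⟩ <;> rcases abs_cases (x - c) with ⟨exc, -⟩ | ⟨exc, -⟩ <;>
    rcases abs_cases c with ⟨ec, -⟩ | ⟨ec, -⟩ <;> rw [ex] at hx₁ hx₂ <;> rw [exc] at hxc₁ hxc₂ <;>
    rw [ec] at hc₁ hc₂ <;> linarith

lemma Complex.im_ne_zero_of_norm_mem_Ioo {r R c : ℝ} {z : ℂ} (hc₁ : R - r ≤ |c|)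
    (hc₂ : |c| ≤ 2 * r) (hz : ‖z‖ ∈ Ioo r R) (hzc : ‖z - c‖ ∈ Ioo r R) : z.im ≠ 0 := by
  intro him
  have hz_real : z = (z.re : ℂ) := Complex.ext rfl (by simp [him])
  rw [hz_real, norm_real, Real.norm_eq_abs] at hz
  rw [hz_real, ← ofReal_sub, norm_real, Real.norm_eq_abs] at hzc
  exact abs_sub_notMem_Ioo_of_abs_mem_Ioo hc₁ hc₂ hz hzc

lemma Complex.exists_norm_eq_one_norm_sub_eq_one_im_pos {c : ℝ} (hc : |c| < 2) :
    ∃ w : ℂ, ‖w‖ = 1 ∧ ‖w - c‖ = 1 ∧ 0 < w.im := by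
  have hpos : 0 < 1 - c ^ 2 / 4 := by nlinarith [sq_abs c, abs_nonneg c]
  set y := √(1 - c ^ 2 / 4)
  have hy : y ^ 2 = 1 - c ^ 2 / 4 := Real.sq_sqrt hpos.le
  have norm_eq_one : ∀ w : ℂ, w.re ^ 2 + w.im ^ 2 = 1 → ‖w‖ = 1 := fun w hw => by
    rw [← pow_eq_one_iff_of_nonneg (norm_nonneg w) two_ne_zero, Complex.sq_norm, normSq_apply, ← hw]
    ring
  refine ⟨⟨c / 2, y⟩, norm_eq_one _ ?_, norm_eq_one _ ?_, Real.sqrt_pos.2 hpos⟩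
  · simp only; rw [hy]; ring
  · simp only [sub_re, sub_im, ofReal_re, ofReal_im, sub_zero]; rw [hy]; ring

lemma mem_sep_sub_eq_iff {r R : ℝ} {c : ℂ} {z : ℂ × ℂ} :
    z ∈ {z ∈ {z : ℂ × ℂ | (r < ‖z.1‖ ∧ ‖z.1‖ < R) ∧ (r < ‖z.2‖ ∧ ‖z.2‖ < R)} | z.1 - z.2 = c} ↔
      ‖z.1‖ ∈ Ioo r R ∧ ‖z.1 - c‖ ∈ Ioo r R ∧ z.2 = z.1 - c := by
  have hdiff : z.1 - z.2 = c ↔ z.2 = z.1 - c := by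
    constructor <;> intro h <;> linear_combination -h
  change ((_ ∧ _) ∧ _ ∧ _) ∧ _ ↔ _
  rw [hdiff]
  constructor
  · rintro ⟨⟨h₁, h₂⟩, h⟩; exact ⟨h₁, h ▸ h₂, h⟩
  · rintro ⟨h₁, h₂, h⟩; exact ⟨⟨h₁, h ▸ h₂⟩, h⟩

lemma sep_pos_union_sep_neg_of_ne_zero {α : Type*} {s : Set α} {f : α → ℝ}
    (hf₀ : ∀ x ∈ s, f x ≠ 0) : {x ∈ s | 0 < f x} ∪ {x ∈ s | f x < 0} = s := by
  ext x
  simp only [mem_union, mem_ofPred_eq, ← and_or_left, and_iff_left_iff_imp]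
  exact fun hx => (hf₀ x hx).symm.lt_or_gt

lemma isClopen_setOf_pos_of_ne_zero {X : Type*} [TopologicalSpace X] {f : X → ℝ}
    (hf : Continuous f) (hf₀ : ∀ x, f x ≠ 0) : IsClopen {x | 0 < f x} := by
  refine ⟨?_, isOpen_lt continuous_const hf⟩
  have hcompl : {x | 0 < f x}ᶜ = {x | f x < 0} := by
    ext x
    simp only [mem_compl_iff, mem_ofPred_eq, not_lt]
    exact ⟨fun h => h.lt_of_ne (hf₀ x), le_of_lt⟩
  rw [← isOpen_compl_iff, hcompl]
  exact isOpen_lt hf continuous_const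

lemma isClopen_setOf_neg_of_ne_zero {X : Type*} [TopologicalSpace X] {f : X → ℝ}
    (hf : Continuous f) (hf₀ : ∀ x, f x ≠ 0) : IsClopen {x | f x < 0} := by
  simpa only [Pi.neg_apply, neg_pos] using
    isClopen_setOf_pos_of_ne_zero hf.neg fun x => neg_ne_zero.2 (hf₀ x)

/-- Let `S` be the product of two annuli
`{z ∈ ℂ² : 3/4 < |z₁| < 5/4, 3/4 < |z₂| < 5/4}` and, for `-1/2 < ε < 1/2`,
let `Dε = {z ∈ S : z₁ - z₂ = 1 + ε}`.  Then `Dε` splits as the disjoint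
union of the nonempty relatively clopen subsets `Dε⁺ = {Im z₁ > 0}` and
`Dε⁻ = {Im z₁ < 0}`; in particular no point of `Dε` has `Im z₁ = 0`. -/
theorem stmt_19 (ε : ℝ) (hε : -(1/2 : ℝ) < ε ∧ ε < 1/2)
    (S : Set (ℂ × ℂ))
    (hS : S = {z : ℂ × ℂ | (3/4 < ‖z.1‖ ∧ ‖z.1‖ < 5/4) ∧
      (3/4 < ‖z.2‖ ∧ ‖z.2‖ < 5/4)})
    (D : Set (ℂ × ℂ))
    (hD : D = {z ∈ S | z.1 - z.2 = 1 + (ε : ℂ)}) :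
    (∀ z ∈ D, z.1.im ≠ 0) ∧
    ({z ∈ D | 0 < z.1.im} ∪ {z ∈ D | z.1.im < 0} = D) ∧
    Disjoint {z ∈ D | 0 < z.1.im} {z ∈ D | z.1.im < 0} ∧
    {z ∈ D | 0 < z.1.im}.Nonempty ∧ {z ∈ D | z.1.im < 0}.Nonempty ∧
    IsClopen {z : D | 0 < (z : ℂ × ℂ).1.im} ∧
    IsClopen {z : D | (z : ℂ × ℂ).1.im < 0} := by
  subst hS
  set c : ℝ := 1 + ε
  have hc : |c| = c := abs_of_pos (by linarith [hε.1])
  rw [show (1 + (ε : ℂ)) = c by push_cast [c]; rfl] at hD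
  have im_ne_zero : ∀ z ∈ D, z.1.im ≠ 0 := fun z hz =>
    have hz := mem_sep_sub_eq_iff.1 (hD ▸ hz)
    im_ne_zero_of_norm_mem_Ioo (by norm_num [hc]; linarith [hε.2])
      (by norm_num [hc]; linarith [hε.1]) hz.1 hz.2.1
  have unit_mem_D : ∀ w : ℂ, ‖w‖ = 1 → ‖w - c‖ = 1 → (w, w - c) ∈ D := fun w h₁ h₂ =>
    hD ▸ mem_sep_sub_eq_iff.2 ⟨by norm_num [h₁], by norm_num [h₂], rfl⟩
  obtain ⟨w, hw₁, hw₂, hw⟩ :=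
    exists_norm_eq_one_norm_sub_eq_one_im_pos (c := c) (by rw [hc]; linarith [hε.2])
  have hw₂' : ‖conj w - c‖ = 1 := by rw [← conj_ofReal, ← map_sub, norm_conj, hw₂]
  have hcont : Continuous fun z : D => (z : ℂ × ℂ).1.im := by fun_prop
  exact ⟨im_ne_zero, sep_pos_union_sep_neg_of_ne_zero im_ne_zero,
    disjoint_left.2 fun _ h h' => h.2.asymm h'.2,
    ⟨_, unit_mem_D w hw₁ hw₂, hw⟩,
    ⟨_, unit_mem_D (conj w) (by rw [norm_conj, hw₁]) hw₂', by simpa using hw⟩,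
    isClopen_setOf_pos_of_ne_zero hcont fun z => im_ne_zero z z.2,
    isClopen_setOf_neg_of_ne_zero hcont fun z => im_ne_zero z z.2⟩
end
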